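/- arXiv:2002.10118 — 5 statements merged into one kernel-verified Lean document; each statement's English description precedes it below -/
import Mathlib

section
/- Let μ ∈ ℝ^d, let Σ be a d×d real symmetric positive definite matrix, let U be a real d×n matrix, c ∈ ℝ^d, and x ∈ ℝⁿ with Ux ≠ 0. Define z(δ) = μᵀ(δ·Ux + c) / √(1 + (π/8)·(δ·Ux + c)ᵀ Σ (δ·Ux + c)) for δ ∈ ℝ. Then, as δ → ∞, |z(δ)| converges to the finite limit |μᵀ(Ux)| / √((π/8)·(Ux)ᵀΣ(Ux)). (Limit part of Theorem 2.4, last-layer approximation: on the terminal linear region of a ReLU feature map φ, φ(δx) = δ·Ux + c, so the softened logit |z(δx)| tends to a constant depending only on μ and Σ.) -/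
open Matrix Filter

/-! Along `δ ↦ δ • Ux + c` the numerator is affine in `δ` and the radicand is a quadratic
polynomial in `δ` whose leading coefficient `(π/8)·(Ux)ᵀΣ(Ux)` is positive by definiteness.
Dividing numerator and denominator by `δ` gives the limit. -/

theorem dotProduct_mulVec_smul_add {R ι : Type*} [CommRing R] [Fintype ι]
    (S : Matrix ι ι R) (v c : ι → R) (t : R) :
    (t • v + c) ⬝ᵥ (S *ᵥ (t • v + c)) =
      (v ⬝ᵥ (S *ᵥ v)) * t ^ 2 + (v ⬝ᵥ (S *ᵥ c) + c ⬝ᵥ (S *ᵥ v)) * t + c ⬝ᵥ (S *ᵥ c) := by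
  simp only [mulVec_add, mulVec_smul, dotProduct_add, add_dotProduct, smul_dotProduct,
    dotProduct_smul, smul_eq_mul]
  ring

theorem tendsto_abs_affine_div_atTop (p q : ℝ) :
    Tendsto (fun t : ℝ => |p * t + q| / t) atTop (nhds |p|) := by
  have hlim : Tendsto (fun t : ℝ => |p + q / t|) atTop (nhds |p|) := by
    simpa using ((tendsto_const_nhds (x := p)).add
      ((tendsto_const_nhds (x := q)).div_atTop tendsto_id)).abs
  refine hlim.congr' ?_
  filter_upwards [eventually_gt_atTop 0] with t ht
  rw [← abs_of_pos ht, ← abs_div, abs_of_pos ht, add_div, mul_div_cancel_right₀ _ ht.ne']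

theorem tendsto_sqrt_quadratic_div_atTop (a b e : ℝ) :
    Tendsto (fun t : ℝ => √(a * t ^ 2 + b * t + e) / t) atTop (nhds √a) := by
  have hlim : Tendsto (fun t : ℝ => √(a + b / t + e / t ^ 2)) atTop (nhds √a) := by
    refine (Real.continuous_sqrt.tendsto a).comp ?_
    simpa using ((tendsto_const_nhds (x := a)).add
      ((tendsto_const_nhds (x := b)).div_atTop tendsto_id)).add
      ((tendsto_const_nhds (x := e)).div_atTop (tendsto_pow_atTop two_ne_zero))
  refine hlim.congr' ?_
  filter_upwards [eventually_gt_atTop 0] with t ht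
  rw [← Real.sqrt_sq ht.le, ← Real.sqrt_div' _ (sq_nonneg t), Real.sqrt_sq ht.le]
  congr 1
  field_simp

theorem tendsto_abs_affine_div_sqrt_quadratic_atTop (p q : ℝ) {a : ℝ} (ha : 0 < a) (b e : ℝ) :
    Tendsto (fun t : ℝ => |p * t + q| / √(a * t ^ 2 + b * t + e)) atTop
      (nhds (|p| / √a)) := by
  refine ((tendsto_abs_affine_div_atTop p q).div (tendsto_sqrt_quadratic_div_atTop a b e)
    (Real.sqrt_pos.2 ha).ne').congr' ?_
  filter_upwards [eventually_gt_atTop 0] with t ht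
  exact div_div_div_cancel_right₀ ht.ne' _ _

/-- Limit part of Theorem 2.4 (last-layer approximation): on the terminal
linear region `φ(δx) = δ·Ux + c`, the softened logit `|z(δ)|` converges, as
`δ → ∞`, to `|μᵀ(Ux)| / √((π/8)·(Ux)ᵀΣ(Ux))`. -/
theorem abs_softened_logit_tendsto_lastLayer {d n : ℕ}
    (μ c : Fin d → ℝ) (S : Matrix (Fin d) (Fin d) ℝ) (hS : S.PosDef)
    (U : Matrix (Fin d) (Fin n) ℝ) (x : Fin n → ℝ) (hUx : U *ᵥ x ≠ 0) :
    Tendsto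
      (fun δ : ℝ =>
        |(μ ⬝ᵥ (δ • (U *ᵥ x) + c)) /
          Real.sqrt (1 + Real.pi / 8 *
            ((δ • (U *ᵥ x) + c) ⬝ᵥ (S *ᵥ (δ • (U *ᵥ x) + c))))|)
      atTop
      (nhds (|μ ⬝ᵥ (U *ᵥ x)| /
        Real.sqrt (Real.pi / 8 * ((U *ᵥ x) ⬝ᵥ (S *ᵥ (U *ᵥ x)))))) := by
  set v := U *ᵥ x
  have hlead : 0 < Real.pi / 8 * (v ⬝ᵥ (S *ᵥ v)) :=
    mul_pos (by positivity) (hS.dotProduct_mulVec_pos hUx)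
  convert tendsto_abs_affine_div_sqrt_quadratic_atTop (μ ⬝ᵥ v) (μ ⬝ᵥ c) hlead
    (Real.pi / 8 * (v ⬝ᵥ (S *ᵥ c) + c ⬝ᵥ (S *ᵥ v))) (1 + Real.pi / 8 * (c ⬝ᵥ (S *ᵥ c)))
    using 2 with δ
  rw [abs_div, abs_of_nonneg (Real.sqrt_nonneg _), dotProduct_mulVec_smul_add, dotProduct_add,
    dotProduct_smul, smul_eq_mul]
  ring_nf
end

section
/- Let μ ∈ ℝ^d, let Σ be a d×d real symmetric positive definite matrix, let U be a real d×n matrix, c ∈ ℝ^d, and x ∈ ℝⁿ with Ux ≠ 0. Define z(δ) = μᵀ(δ·Ux + c) / √(1 + (π/8)·(δ·Ux + c)ᵀ Σ (δ·Ux + c)). Then the limit of σ(|z(δ)|) as δ → ∞ exists and satisfies lim_{δ→∞} σ(|z(δ)|) ≤ σ( ‖μ‖ / √((π/8)·λ_min(Σ)) ). (Confidence bound of Theorem 2.4, last-layer approximation.) -/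
/-!
Writing `v = U x` and `δ • v + c = δ • (v + δ⁻¹ • c)`, the softened logit equals
`F (δ⁻¹, v + δ⁻¹ • c)` with `F (t, u) = μ ⬝ u / √(t² + (π/8) u ⬝ S u)`, which is continuous at
`(0, v)` because `v ⬝ S v > 0`. Hence the logit converges to `μ ⬝ v / √((π/8) v ⬝ S v)`. Its
absolute value is bounded by Cauchy–Schwarz in the numerator and the Rayleigh bound
`v ⬝ S v ≥ λ_min ‖v‖²` in the denominator; the factors `‖v‖` cancel, and `σ` is monotone.
-/

open Matrix Filter

/-- The logistic (sigmoid) function. -/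
noncomputable def sigmoid (t : ℝ) : ℝ := 1 / (1 + Real.exp (-t))

open scoped MatrixOrder Topology

theorem sigmoid_eq_real_sigmoid : sigmoid = Real.sigmoid := funext fun _ => one_div _

section
variable {ι : Type*} [Fintype ι]

theorem abs_dotProduct_le_sqrt_mul_sqrt (v w : ι → ℝ) : |v ⬝ᵥ w| ≤ √(v ⬝ᵥ v) * √(w ⬝ᵥ w) := by
  have key (u : ι → ℝ) : u ⬝ᵥ w ≤ √(u ⬝ᵥ u) * √(w ⬝ᵥ w) := by
    simpa only [dotProduct, sq] using Real.sum_mul_le_sqrt_mul_sqrt Finset.univ u w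
  exact abs_le'.mpr ⟨key v, by simpa using key (-v)⟩

theorem Matrix.IsHermitian.iInf_eigenvalues_mul_dotProduct_self_le [DecidableEq ι]
    {A : Matrix ι ι ℝ} (hA : A.IsHermitian) (v : ι → ℝ) :
    (⨅ i, hA.eigenvalues i) * (v ⬝ᵥ v) ≤ v ⬝ᵥ A *ᵥ v := by
  have hle : algebraMap ℝ (Matrix ι ι ℝ) (⨅ i, hA.eigenvalues i) ≤ A := by
    refine algebraMap_le_of_le_spectrum (fun x hx => ?_) hA.isSelfAdjoint
    obtain ⟨i, rfl⟩ := hA.spectrum_real_eq_range_eigenvalues ▸ hx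
    exact ciInf_le (Set.finite_range _).bddBelow i
  simpa [sub_mulVec, Algebra.algebraMap_eq_smul_one, smul_mulVec, dotProduct_sub] using
    (le_iff.mp hle).dotProduct_mulVec_nonneg v

theorem Matrix.PosDef.iInf_eigenvalues_pos [DecidableEq ι] [Nonempty ι] {A : Matrix ι ι ℝ}
    (hA : A.PosDef) : 0 < ⨅ i, hA.1.eigenvalues i := by
  obtain ⟨i, hi⟩ := exists_eq_ciInf_of_finite (f := hA.1.eigenvalues)
  exact hi ▸ hA.eigenvalues_pos i

variable {S : Matrix ι ι ℝ} {k : ℝ}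

theorem dotProduct_smul_div_sqrt_one_add {δ : ℝ} (hδ : 0 < δ) (μ u : ι → ℝ) :
    μ ⬝ᵥ (δ • u) / √(1 + k * ((δ • u) ⬝ᵥ S *ᵥ (δ • u))) =
      μ ⬝ᵥ u / √(δ⁻¹ ^ 2 + k * (u ⬝ᵥ S *ᵥ u)) := by
  have hrad : 1 + k * ((δ • u) ⬝ᵥ S *ᵥ (δ • u)) = δ ^ 2 * (δ⁻¹ ^ 2 + k * (u ⬝ᵥ S *ᵥ u)) := by
    simp only [mulVec_smul, dotProduct_smul, smul_dotProduct, smul_eq_mul]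
    field_simp
  rw [hrad, Real.sqrt_mul (sq_nonneg δ), Real.sqrt_sq hδ.le, dotProduct_smul, smul_eq_mul,
    mul_div_mul_left _ _ hδ.ne']

theorem tendsto_dotProduct_div_sqrt_one_add_quadratic (μ v c : ι → ℝ)
    (hq : 0 < k * (v ⬝ᵥ S *ᵥ v)) :
    Tendsto (fun δ : ℝ => μ ⬝ᵥ (δ • v + c) / √(1 + k * ((δ • v + c) ⬝ᵥ S *ᵥ (δ • v + c))))
      atTop (𝓝 (μ ⬝ᵥ v / √(k * (v ⬝ᵥ S *ᵥ v)))) := by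
  set F : ℝ × (ι → ℝ) → ℝ := fun p => μ ⬝ᵥ p.2 / √(p.1 ^ 2 + k * (p.2 ⬝ᵥ S *ᵥ p.2))
  have hF : ContinuousAt F (0, v) := by
    have hden : √((0 : ℝ) ^ 2 + k * (v ⬝ᵥ S *ᵥ v)) ≠ 0 := by
      rw [Real.sqrt_ne_zero']; simpa using hq
    exact ContinuousAt.div (by fun_prop) (by fun_prop) hden
  have hp : Tendsto (fun δ : ℝ => (δ⁻¹, v + δ⁻¹ • c)) atTop (𝓝 (0, v)) := by
    refine tendsto_inv_atTop_zero.prodMk_nhds ?_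
    simpa using tendsto_const_nhds.add ((tendsto_inv_atTop_zero (𝕜 := ℝ)).smul_const c)
  have hlim : Tendsto (F ∘ fun δ : ℝ => (δ⁻¹, v + δ⁻¹ • c)) atTop
      (𝓝 (μ ⬝ᵥ v / √(k * (v ⬝ᵥ S *ᵥ v)))) := by
    simpa [F] using hF.tendsto.comp hp
  refine hlim.congr' ?_
  filter_upwards [eventually_gt_atTop 0] with δ hδ
  rw [Function.comp_apply, ← smul_inv_smul₀ hδ.ne' (δ • v + c), smul_add, inv_smul_smul₀ hδ.ne',
    dotProduct_smul_div_sqrt_one_add hδ]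

theorem abs_dotProduct_div_sqrt_le {lam : ℝ} (hk : 0 < k) (hlam : 0 < lam) {v : ι → ℝ}
    (hv : v ≠ 0) (hlam_le : lam * (v ⬝ᵥ v) ≤ v ⬝ᵥ S *ᵥ v) (μ : ι → ℝ) :
    |μ ⬝ᵥ v / √(k * (v ⬝ᵥ S *ᵥ v))| ≤ √(μ ⬝ᵥ μ) / √(k * lam) := by
  rw [abs_div, abs_of_nonneg (Real.sqrt_nonneg _)]
  have hvv : 0 < v ⬝ᵥ v := by simpa using dotProduct_self_star_pos_iff.mpr hv
  have hden : √(k * lam) * √(v ⬝ᵥ v) ≤ √(k * (v ⬝ᵥ S *ᵥ v)) := by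
    rw [← Real.sqrt_mul (by positivity), mul_assoc]
    exact Real.sqrt_le_sqrt (mul_le_mul_of_nonneg_left hlam_le hk.le)
  calc |μ ⬝ᵥ v| / √(k * (v ⬝ᵥ S *ᵥ v))
      ≤ √(μ ⬝ᵥ μ) * √(v ⬝ᵥ v) / (√(k * lam) * √(v ⬝ᵥ v)) :=
        div_le_div₀ (by positivity) (abs_dotProduct_le_sqrt_mul_sqrt μ v) (by positivity) hden
    _ = √(μ ⬝ᵥ μ) / √(k * lam) := mul_div_mul_right _ _ (Real.sqrt_pos.mpr hvv).ne'

end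

/-- Confidence bound of Theorem 2.4 (last-layer approximation): the limit of
`σ(|z(δ)|)` as `δ → ∞` exists and is at most
`σ(‖μ‖ / √((π/8)·λ_min(Σ)))`. -/
theorem sigmoid_abs_softened_logit_tendsto_le_lastLayer {d n : ℕ}
    (μ c : Fin d → ℝ) (S : Matrix (Fin d) (Fin d) ℝ) (hS : S.PosDef)
    (U : Matrix (Fin d) (Fin n) ℝ) (x : Fin n → ℝ) (hUx : U *ᵥ x ≠ 0) :
    ∃ L : ℝ,
      Tendsto
        (fun δ : ℝ =>
          sigmoid |(μ ⬝ᵥ (δ • (U *ᵥ x) + c)) /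
            Real.sqrt (1 + Real.pi / 8 *
              ((δ • (U *ᵥ x) + c) ⬝ᵥ (S *ᵥ (δ • (U *ᵥ x) + c))))|)
        atTop (nhds L) ∧
      L ≤ sigmoid (Real.sqrt (μ ⬝ᵥ μ) /
        Real.sqrt (Real.pi / 8 * ⨅ i, hS.1.eigenvalues i)) := by
  obtain ⟨i, -⟩ := Function.ne_iff.mp hUx
  have : Nonempty (Fin d) := ⟨i⟩
  have hk : 0 < Real.pi / 8 := by positivity
  have hq : 0 < Real.pi / 8 * (U *ᵥ x ⬝ᵥ S *ᵥ (U *ᵥ x)) :=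
    mul_pos hk (by simpa using hS.dotProduct_mulVec_pos hUx)
  rw [sigmoid_eq_real_sigmoid]
  exact ⟨_, (continuous_abs.sigmoid.tendsto _).comp
      (tendsto_dotProduct_div_sqrt_one_add_quadratic μ (U *ᵥ x) c hq),
    Real.sigmoid_monotone (abs_dotProduct_div_sqrt_le hk hS.iInf_eigenvalues_pos hUx
      (hS.1.iInf_eigenvalues_mul_dotProduct_self_le _) μ)⟩
end

section
/- For every a ∈ ℝ and b > 0, the function δ ↦ |δ·a| / √(1 + (π/8)·δ²·b) is monotone nondecreasing on (0, ∞). (Second part of Theorems 2.3 and 2.4: in a linear region containing the ray {δx : δ ≥ α} of a bias-free ReLU network, the softened logit |z(δx)| = |δa|/√(1 + (π/8)δ²b) with a = μᵀUx and b = (Ux)ᵀΣ(Ux) is increasing in δ.) -/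
/-- Second part of Theorems 2.3 and 2.4: for `a ∈ ℝ` and `b > 0`, the function
`δ ↦ |δ·a| / √(1 + (π/8)·δ²·b)` is monotone nondecreasing on `(0, ∞)`. -/
theorem monotoneOn_abs_softened_logit (a b : ℝ) (hb : 0 < b) :
    MonotoneOn (fun δ : ℝ => |δ * a| / Real.sqrt (1 + Real.pi / 8 * δ ^ 2 * b))
      (Set.Ioi 0) := by
  have hpi : 0 < Real.pi := Real.pi_pos
  intro x hx y hy hxy
  simp only [Set.mem_Ioi] at hx hy
  have hc : 0 < Real.pi / 8 * b := by positivity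
  have hA : (0:ℝ) < 1 + Real.pi / 8 * x ^ 2 * b := by nlinarith
  have hB : (0:ℝ) < 1 + Real.pi / 8 * y ^ 2 * b := by nlinarith
  simp only
  rw [div_le_div_iff₀ (Real.sqrt_pos.mpr hA) (Real.sqrt_pos.mpr hB)]
  rw [abs_mul, abs_mul, abs_of_pos hx, abs_of_pos hy]
  have key : x * Real.sqrt (1 + Real.pi / 8 * y ^ 2 * b)
      ≤ y * Real.sqrt (1 + Real.pi / 8 * x ^ 2 * b) := by
    rw [← Real.sqrt_sq hx.le, ← Real.sqrt_sq hy.le, ← Real.sqrt_mul (by positivity),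
      ← Real.sqrt_mul (by positivity)]
    apply Real.sqrt_le_sqrt
    rw [Real.sq_sqrt (sq_nonneg x), Real.sq_sqrt (sq_nonneg y)]
    nlinarith
  calc x * |a| * Real.sqrt (1 + Real.pi / 8 * y ^ 2 * b)
      = |a| * (x * Real.sqrt (1 + Real.pi / 8 * y ^ 2 * b)) := by ring
    _ ≤ |a| * (y * Real.sqrt (1 + Real.pi / 8 * x ^ 2 * b)) := by
        exact mul_le_mul_of_nonneg_left key (abs_nonneg a)
    _ = y * |a| * Real.sqrt (1 + Real.pi / 8 * x ^ 2 * b) := by ring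
end

section
/- Let u, x ∈ ℝⁿ, c ∈ ℝ, g ∈ ℝ^p, let J be a real n×p matrix, and let Σ be a p×p real symmetric positive definite matrix, with Jᵀx ≠ 0. Define z(δ) = (δ·uᵀx + c) / √(1 + (π/8)·(δ·Jᵀx + g)ᵀ Σ (δ·Jᵀx + g)) for δ ∈ ℝ. Then, as δ → ∞, |z(δ)| converges to the finite limit |uᵀx| / √((π/8)·(Jᵀx)ᵀΣ(Jᵀx)). (Limit part of Theorem 2.3, all-layer approximation: on the terminal linear region, f_μ(δx) = δ·uᵀx + c and the gradient is d(δx) = δ(Jᵀx + δ⁻¹·∇_θ c), so |z(δx)| tends to a constant.) -/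
/-!
Factoring `δ` out of `δ • v + g` gives `Q(δ • v + g) = δ² Q(v + δ⁻¹ • g)` for the quadratic form `Q`,
so for `δ > 0` the quantity is `F (δ⁻¹)` with
`F t = |a + c t| / √(t² + κ Q(v + t • g))`. This `F` is continuous at `0`, where the radicand is
`κ Q(v) > 0`, and `δ⁻¹ → 0`.
-/

open Matrix Filter Topology

section QuadraticLimit

variable {ι : Type*} [Fintype ι] (S : Matrix ι ι ℝ) (v g : ι → ℝ)

theorem smul_add_dotProduct_mulVec_smul_add {δ : ℝ} (hδ : δ ≠ 0) :
    (δ • v + g) ⬝ᵥ (S *ᵥ (δ • v + g))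
      = δ ^ 2 * ((v + δ⁻¹ • g) ⬝ᵥ (S *ᵥ (v + δ⁻¹ • g))) := by
  have hfactor : δ • v + g = δ • (v + δ⁻¹ • g) := by
    rw [smul_add, smul_smul, mul_inv_cancel₀ hδ, one_smul]
  rw [hfactor, mulVec_smul, smul_dotProduct, dotProduct_smul, smul_eq_mul, smul_eq_mul]
  ring

theorem sqrt_one_add_mul_dotProduct_mulVec_smul_add (κ : ℝ) {δ : ℝ} (hδ : 0 < δ) :
    √(1 + κ * ((δ • v + g) ⬝ᵥ (S *ᵥ (δ • v + g))))
      = δ * √(δ⁻¹ ^ 2 + κ * ((v + δ⁻¹ • g) ⬝ᵥ (S *ᵥ (v + δ⁻¹ • g)))) := by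
  have hradicand : 1 + κ * ((δ • v + g) ⬝ᵥ (S *ᵥ (δ • v + g)))
      = δ ^ 2 * (δ⁻¹ ^ 2 + κ * ((v + δ⁻¹ • g) ⬝ᵥ (S *ᵥ (v + δ⁻¹ • g)))) := by
    rw [smul_add_dotProduct_mulVec_smul_add S v g hδ.ne']
    field_simp
  rw [hradicand, Real.sqrt_mul (sq_nonneg δ), Real.sqrt_sq hδ.le]

theorem continuousAt_abs_div_sqrt_dotProduct_mulVec_add_smul (a c κ : ℝ)
    (hv : 0 < κ * (v ⬝ᵥ (S *ᵥ v))) :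
    ContinuousAt
      (fun t : ℝ => |a + c * t| / √(t ^ 2 + κ * ((v + t • g) ⬝ᵥ (S *ᵥ (v + t • g))))) 0 := by
  refine ContinuousAt.div (by fun_prop) (by fun_prop) ?_
  simpa using (Real.sqrt_pos.mpr hv).ne'

theorem tendsto_abs_div_sqrt_one_add_mul_dotProduct_mulVec (a c κ : ℝ)
    (hv : 0 < κ * (v ⬝ᵥ (S *ᵥ v))) :
    Tendsto (fun δ : ℝ => |(δ * a + c) / √(1 + κ * ((δ • v + g) ⬝ᵥ (S *ᵥ (δ • v + g))))|)
      atTop (𝓝 (|a| / √(κ * (v ⬝ᵥ (S *ᵥ v))))) := by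
  have hlim := (continuousAt_abs_div_sqrt_dotProduct_mulVec_add_smul S v g a c κ hv).tendsto.comp
    tendsto_inv_atTop_zero
  simp only [mul_zero, add_zero, zero_smul, ne_eq, OfNat.ofNat_ne_zero, not_false_eq_true,
    zero_pow, zero_add] at hlim
  refine hlim.congr' ?_
  filter_upwards [eventually_gt_atTop 0] with δ hδ
  have hnum : δ * a + c = δ * (a + c * δ⁻¹) := by field_simp
  rw [Function.comp_apply, abs_div, abs_of_nonneg (Real.sqrt_nonneg _),
    sqrt_one_add_mul_dotProduct_mulVec_smul_add S v g κ hδ, hnum, abs_mul, abs_of_pos hδ,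
    mul_div_mul_left _ _ hδ.ne']

end QuadraticLimit

/-- Limit part of Theorem 2.3 (all-layer approximation): on the terminal
linear region, `f_μ(δx) = δ·uᵀx + c` with gradient `δ·Jᵀx + g`, and the
softened logit `|z(δ)|` converges, as `δ → ∞`, to
`|uᵀx| / √((π/8)·(Jᵀx)ᵀΣ(Jᵀx))`. -/
theorem abs_softened_logit_tendsto_allLayer {n p : ℕ}
    (u x : Fin n → ℝ) (c : ℝ) (g : Fin p → ℝ)
    (J : Matrix (Fin n) (Fin p) ℝ)
    (S : Matrix (Fin p) (Fin p) ℝ) (hS : S.PosDef)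
    (hJx : Jᵀ *ᵥ x ≠ 0) :
    Tendsto
      (fun δ : ℝ =>
        |(δ * (u ⬝ᵥ x) + c) /
          Real.sqrt (1 + Real.pi / 8 *
            ((δ • (Jᵀ *ᵥ x) + g) ⬝ᵥ (S *ᵥ (δ • (Jᵀ *ᵥ x) + g))))|)
      atTop
      (nhds (|u ⬝ᵥ x| /
        Real.sqrt (Real.pi / 8 * ((Jᵀ *ᵥ x) ⬝ᵥ (S *ᵥ (Jᵀ *ᵥ x)))))) := by
  have hQ : 0 < (Jᵀ *ᵥ x) ⬝ᵥ (S *ᵥ (Jᵀ *ᵥ x)) := by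
    simpa using hS.dotProduct_mulVec_pos hJx
  exact tendsto_abs_div_sqrt_one_add_mul_dotProduct_mulVec S _ g _ c _
    (mul_pos (by positivity) hQ)
end

section
/- Let Φ : ℝ → ℝ denote the cumulative distribution function of the standard Gaussian measure on ℝ, and let γ_{m,v} denote the Gaussian measure on ℝ with mean m ∈ ℝ and variance v > 0. Then for every λ > 0, ∫ Φ(λ·a) dγ_{m,v}(a) = Φ( λ·m / √(1 + λ²·v) ). (The probit–Gaussian convolution identity underlying the approximate predictive distribution in Eq. (3); with λ = √(π/8) it yields p(y=1|x,D) ≈ Φ( √(π/8)·μᵀφ / √(1 + (π/8)·φᵀΣφ) ).) -/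
/-!
If `Z ~ N(0, 1)` and `A ~ N(m, v)` are independent, then `Φ(λa) = P(Z ≤ λa)`, so the integral is
`P(Z - λA ≤ 0)`. The law of `Z - λA` is the convolution `N(-λm, λ²v) ∗ N(0, 1) = N(-λm, 1 + λ²v)`,
and standardising gives `Φ(λm / √(1 + λ²v))`.
-/

open MeasureTheory ProbabilityTheory

/-- The cumulative distribution function of the standard Gaussian measure. -/
noncomputable def stdGaussianCDF (t : ℝ) : ℝ :=
  ((gaussianReal 0 1) (Set.Iic t)).toReal

open Set
open scoped NNReal

theorem MeasureTheory.Measure.conv_apply {M : Type*} [AddMonoid M] [MeasurableSpace M]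
    [MeasurableAdd₂ M] (μ ν : Measure M) [SFinite ν] {s : Set M} (hs : MeasurableSet s) :
    (μ ∗ ν) s = ∫⁻ x, ν ((x + ·) ⁻¹' s) ∂μ := by
  rw [Measure.conv, Measure.map_apply measurable_add hs, Measure.prod_apply (measurable_add hs)]
  rfl

theorem MeasureTheory.measurable_measure_Iic {α : Type*} [LinearOrder α] [TopologicalSpace α]
    [OrderClosedTopology α] [MeasurableSpace α] [BorelSpace α] (μ : Measure α) :
    Measurable fun t ↦ μ (Iic t) :=
  Monotone.measurable fun _ _ hst ↦ measure_mono (Iic_subset_Iic.mpr hst)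

theorem ProbabilityTheory.gaussianReal_Iic {m : ℝ} {v : ℝ≥0} (hv : v ≠ 0) (t : ℝ) :
    gaussianReal m v (Iic t) = gaussianReal 0 1 (Iic ((t - m) / √v)) := by
  have hσ : 0 < √(v : ℝ) := by positivity
  have hmap : (gaussianReal 0 1).map (fun x ↦ √(v : ℝ) * x + m) = gaussianReal m v := by
    have : (fun x ↦ √(v : ℝ) * x + m) = (· + m) ∘ (√(v : ℝ) * ·) := rfl
    rw [this, ← Measure.map_map (measurable_add_const m) (measurable_const_mul _),
      gaussianReal_map_const_mul, gaussianReal_map_add_const]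
    congr 1
    · ring
    · ext; simp
  rw [← hmap, Measure.map_apply (by fun_prop) measurableSet_Iic]
  congr 1
  ext x
  simp [le_div_iff₀ hσ, mul_comm, le_sub_iff_add_le]

theorem ProbabilityTheory.lintegral_gaussianReal_Iic_const_mul (m l : ℝ) (v : ℝ≥0) :
    ∫⁻ a, gaussianReal 0 1 (Iic (l * a)) ∂gaussianReal m v
      = (gaussianReal (-l * m) ((.mk (l ^ 2) (sq_nonneg l) : ℝ≥0) * v) ∗ gaussianReal 0 1)
          (Iic 0) := by
  have hmap : (gaussianReal m v).map ((-l) * ·)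
      = gaussianReal (-l * m) ((.mk (l ^ 2) (sq_nonneg l) : ℝ≥0) * v) := by
    rw [gaussianReal_map_const_mul]
    simp only [neg_sq]
  simp_rw [← hmap, Measure.conv_apply _ _ measurableSet_Iic, preimage_const_add_Iic]
  rw [lintegral_map (f := fun x ↦ gaussianReal 0 1 (Iic (0 - x)))
    ((measurable_measure_Iic _).comp (measurable_const_sub 0)) (measurable_const_mul _)]
  simp

theorem integral_stdGaussianCDF_gaussianReal_general (m : ℝ) (v : NNReal)
    (l : ℝ) :
    ∫ a, stdGaussianCDF (l * a) ∂(gaussianReal m v) =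
      stdGaussianCDF (l * m / Real.sqrt (1 + l ^ 2 * (v : ℝ))) := by
  have hV : (.mk (l ^ 2) (sq_nonneg l) * v + 1 : ℝ≥0) ≠ 0 := by positivity
  calc ∫ a, stdGaussianCDF (l * a) ∂(gaussianReal m v)
      = (∫⁻ a, gaussianReal 0 1 (Iic (l * a)) ∂gaussianReal m v).toReal :=
        integral_toReal ((measurable_measure_Iic _).comp (measurable_const_mul l)).aemeasurable
          (ae_of_all _ fun _ ↦ measure_lt_top _ _)
    _ = (gaussianReal (-l * m + 0) (.mk (l ^ 2) (sq_nonneg l) * v + 1) (Iic 0)).toReal := by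
        rw [lintegral_gaussianReal_Iic_const_mul, gaussianReal_conv_gaussianReal]
    _ = stdGaussianCDF (l * m / Real.sqrt (1 + l ^ 2 * (v : ℝ))) := by
        rw [gaussianReal_Iic hV, stdGaussianCDF]
        congr 4
        · ring
        · simp [add_comm]

/-- The probit–Gaussian convolution identity (Eq. (3)): for every `λ > 0`,
`∫ Φ(λ·a) dγ_{m,v}(a) = Φ(λ·m / √(1 + λ²·v))`, where `γ_{m,v}` is the
Gaussian measure with mean `m` and variance `v > 0`. -/
theorem integral_stdGaussianCDF_gaussianReal (m : ℝ) (v : NNReal) (hv : 0 < v)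
    (l : ℝ) (hl : 0 < l) :
    ∫ a, stdGaussianCDF (l * a) ∂(gaussianReal m v) =
      stdGaussianCDF (l * m / Real.sqrt (1 + l ^ 2 * (v : ℝ))) :=
  integral_stdGaussianCDF_gaussianReal_general m v l
end
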